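/- The function x ↦ √(1/x + 2 − (3/2)√6) is nonnegative and interval-integrable on (0, π/16], and −(1/2)·√(6√6) + (1/2)·∫ from 0 to π/16 of √(1/x + 2 − (3/2)√6) dx ≥ −1.6. -/

import Mathlib

open Real MeasureTheory intervalIntegral

/-!
On `(0, T]` with `c ≤ 0` the integrand `√(1/x + c)` is squeezed between `√(1 + cT) · x^(-1/2)`
and `x^(-1/2)`, both of which are integrable at `0`. The lower comparison integrates to
`2√((1 + cT)T)`, and for `T = π/16`, `c = 2 − (3/2)√6` this exceeds `0.7`, while
`(1/2)√(6√6) < 1.92`.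
-/

lemma rpow_neg_half_eq_sqrt_one_div {x : ℝ} (hx : 0 ≤ x) : x ^ (-(1/2) : ℝ) = √(1/x) := by
  rw [rpow_neg hx, ← sqrt_eq_rpow, ← sqrt_inv, one_div]

lemma integral_rpow_neg_half (T : ℝ) :
    ∫ x in (0:ℝ)..T, x ^ (-(1/2) : ℝ) = 2 * √T := by
  rw [integral_rpow (Or.inl (by norm_num)), zero_rpow (by norm_num), sqrt_eq_rpow]
  norm_num
  ring

section SqrtInvAdd

variable {c : ℝ}

lemma sqrt_one_div_add_le_rpow (hc : c ≤ 0) {x : ℝ} (hx : 0 < x) :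
    √(1/x + c) ≤ x ^ (-(1/2) : ℝ) := by
  rw [rpow_neg_half_eq_sqrt_one_div hx.le]
  exact sqrt_le_sqrt (by linarith)

lemma intervalIntegrable_sqrt_one_div_add (hc : c ≤ 0) {T : ℝ} (hT : 0 ≤ T) :
    IntervalIntegrable (fun x => √(1/x + c)) volume 0 T := by
  refine (intervalIntegrable_rpow' (r := -(1/2)) (by norm_num)).mono_fun
    (by fun_prop) ?_
  rw [Filter.EventuallyLE, ae_restrict_iff' measurableSet_uIoc]
  refine Filter.Eventually.of_forall fun x hx => ?_
  rw [Set.uIoc_of_le hT] at hx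
  rw [norm_of_nonneg (sqrt_nonneg _), norm_of_nonneg (rpow_nonneg hx.1.le _)]
  exact sqrt_one_div_add_le_rpow hc hx.1

lemma sqrt_one_add_mul_mul_rpow_le {T x : ℝ} (hc : c ≤ 0) (hx : x ∈ Set.Ioc 0 T) :
    √(1 + c * T) * x ^ (-(1/2) : ℝ) ≤ √(1/x + c) := by
  obtain ⟨hx0, hxT⟩ := hx
  rw [rpow_neg_half_eq_sqrt_one_div hx0.le, ← sqrt_mul' _ (by positivity)]
  refine sqrt_le_sqrt ?_
  -- `(1 + cT)/x ≤ 1/x + c` amounts to `c (T/x - 1) ≤ 0`.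
  have hTx : 1 ≤ T / x := (one_le_div hx0).2 hxT
  have hsplit : (1 + c * T) * (1 / x) = 1 / x + c * (T / x) := by field_simp
  rw [hsplit]
  nlinarith

lemma two_mul_sqrt_le_integral_sqrt_one_div_add (hc : c ≤ 0) {T : ℝ} (hT : 0 ≤ T) :
    2 * √((1 + c * T) * T) ≤ ∫ x in (0:ℝ)..T, √(1/x + c) := by
  have hmono := integral_mono_on hT
    ((intervalIntegrable_rpow' (r := -(1/2)) (by norm_num)).const_mul √(1 + c * T))
    (intervalIntegrable_sqrt_one_div_add hc hT) fun x hx => by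
      rcases hx.1.eq_or_lt with rfl | hx0
      · simp [zero_rpow, sqrt_nonneg]
      · exact sqrt_one_add_mul_mul_rpow_le hc ⟨hx0, hx.2⟩
  rw [intervalIntegral.integral_const_mul, integral_rpow_neg_half] at hmono
  rw [sqrt_mul' _ hT]
  linarith

end SqrtInvAdd

theorem newtonian_tetrahedral_v_lower_bound :
    (∀ x ∈ Set.Ioc (0:ℝ) (π/16), 0 ≤ Real.sqrt (1/x + 2 - (3/2) * Real.sqrt 6)) ∧
    IntervalIntegrable (fun x : ℝ => Real.sqrt (1/x + 2 - (3/2) * Real.sqrt 6))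
      volume 0 (π/16) ∧
    -(1/2) * Real.sqrt (6 * Real.sqrt 6) +
      (1/2) * ∫ x in (0:ℝ)..(π/16), Real.sqrt (1/x + 2 - (3/2) * Real.sqrt 6)
      ≥ -1.6 := by
  have h6l : (2.449:ℝ) ≤ √6 := by rw [le_sqrt' (by norm_num)]; norm_num
  have h6u : √6 ≤ 2.4495 := by rw [sqrt_le_iff]; norm_num
  have hπl := pi_gt_d6
  have hπu := pi_lt_d2
  have hc : 2 - (3/2) * √6 ≤ 0 := by linarith
  have hT : 0 ≤ π/16 := by positivity
  simp only [add_sub_assoc]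
  refine ⟨fun _ _ => sqrt_nonneg _, intervalIntegrable_sqrt_one_div_add hc hT, ?_⟩
  have hI := two_mul_sqrt_le_integral_sqrt_one_div_add hc hT
  have hA : √(6 * √6) ≤ 3.834 := by rw [sqrt_le_iff]; constructor <;> nlinarith
  have hB : 0.35 ≤ √((1 + (2 - (3/2) * √6) * (π/16)) * (π/16)) := by
    rw [le_sqrt' (by norm_num)]
    nlinarith [mul_le_mul_of_nonneg_left h6u (sq_nonneg (π/16))]
  linarith
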